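/- arXiv:2506.03411 — 5 statements merged into one kernel-verified Lean document; each statement's English description precedes it below -/
import Mathlib

section
/- Let g be a linear separator in ℝ^d given by g(x) = sign(⟨w_g, x⟩ + b). If two points p⁺ = x₀ + ε·w_g and p⁻ = x₀ − ε·w_g (for some x₀ on the boundary of g, unit vector w_g, and ε > 0), labeled +1 and −1 respectively, are the unique pair of closest points between the two classes in a training set, then the maximum-margin separating hyperplane for that training set is exactly the boundary of g. -/
open scoped InnerProductSpace

/-- `(w, b)` (weakly) separates the labeled set `S`: every point is on the side of the
hyperplane matching its ±1 label. -/
def Separates {d : ℕ} (w : EuclideanSpace ℝ (Fin d)) (b : ℝ)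
    (S : Finset (EuclideanSpace ℝ (Fin d) × ℝ)) : Prop :=
  ∀ p ∈ S, 0 ≤ p.2 * (⟪w, p.1⟫_ℝ + b)

/-- The margin of the hyperplane `(w, b)` (with `‖w‖ = 1`) on the set `S`: the infimum
of distances from the data points to the hyperplane. -/
noncomputable def Margin {d : ℕ} (w : EuclideanSpace ℝ (Fin d)) (b : ℝ)
    (S : Finset (EuclideanSpace ℝ (Fin d) × ℝ)) : ℝ :=
  sInf {r : ℝ | ∃ p ∈ S, r = |⟪w, p.1⟫_ℝ + b|}

/-- `(w, b)` is a maximum-margin separator of `S`. -/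
def IsMaxMargin {d : ℕ} (w : EuclideanSpace ℝ (Fin d)) (b : ℝ)
    (S : Finset (EuclideanSpace ℝ (Fin d) × ℝ)) : Prop :=
  ‖w‖ = 1 ∧ Separates w b S ∧
    ∀ w' b', ‖w'‖ = 1 → Separates w' b' S → Margin w' b' S ≤ Margin w b S

/-!
For unit `w'`, the margin of a separator is at most half the projected distance `⟪w', p⁺ - p⁻⟫`
of any oppositely labeled pair; for `p± = x₀ ± ε • w_g` this is `ε ⟪w', w_g⟫ ≤ ε`, and `(w_g, b)`
attains `ε` because every other point is farther away. Equality forces `⟪w', w_g⟫ = 1`, hence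
`w' = w_g` (equality in Cauchy–Schwarz), and then both `p⁺` and `p⁻` lie at distance exactly `ε`
from the hyperplane, which pins down the offset `b' = b`.
-/

lemma le_abs_of_le_mul_of_sign {y t r : ℝ} (hy : y = 1 ∨ y = -1) (h : r ≤ y * t) : r ≤ |t| :=
  h.trans <| (le_abs_self _).trans_eq <| by rcases hy with rfl | rfl <;> simp

section Margin

variable {d : ℕ} {w : EuclideanSpace ℝ (Fin d)} {b : ℝ}
  {S : Finset (EuclideanSpace ℝ (Fin d) × ℝ)}

lemma margin_le_abs {p : EuclideanSpace ℝ (Fin d) × ℝ} (hp : p ∈ S) :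
    Margin w b S ≤ |⟪w, p.1⟫_ℝ + b| :=
  csInf_le ⟨0, by rintro r ⟨q, -, rfl⟩; exact abs_nonneg _⟩ ⟨p, hp, rfl⟩

lemma le_margin {r : ℝ} (hS : S.Nonempty) (h : ∀ p ∈ S, r ≤ |⟪w, p.1⟫_ℝ + b|) :
    r ≤ Margin w b S := by
  obtain ⟨p, hp⟩ := hS
  exact le_csInf ⟨_, p, hp, rfl⟩ (by rintro r ⟨q, hq, rfl⟩; exact h q hq)

lemma margin_eq_of_forall_le {r : ℝ} {p : EuclideanSpace ℝ (Fin d) × ℝ} (hp : p ∈ S)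
    (hpr : |⟪w, p.1⟫_ℝ + b| = r) (h : ∀ q ∈ S, r ≤ |⟪w, q.1⟫_ℝ + b|) :
    Margin w b S = r :=
  le_antisymm (hpr ▸ margin_le_abs hp) (le_margin ⟨p, hp⟩ h)

lemma margin_le_of_pos_label {p : EuclideanSpace ℝ (Fin d)} (hsep : Separates w b S)
    (hp : (p, 1) ∈ S) : Margin w b S ≤ ⟪w, p⟫_ℝ + b := by
  have hnonneg : 0 ≤ ⟪w, p⟫_ℝ + b := by linarith [hsep _ hp]
  simpa [abs_of_nonneg hnonneg] using margin_le_abs (w := w) (b := b) hp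

lemma margin_le_of_neg_label {q : EuclideanSpace ℝ (Fin d)} (hsep : Separates w b S)
    (hq : (q, -1) ∈ S) : Margin w b S ≤ -(⟪w, q⟫_ℝ + b) := by
  have hnonpos : ⟪w, q⟫_ℝ + b ≤ 0 := by linarith [hsep _ hq]
  simpa [abs_of_nonpos hnonpos] using margin_le_abs (w := w) (b := b) hq

lemma two_mul_margin_le_inner_sub {p q : EuclideanSpace ℝ (Fin d)} (hsep : Separates w b S)
    (hp : (p, 1) ∈ S) (hq : (q, -1) ∈ S) : 2 * Margin w b S ≤ ⟪w, p - q⟫_ℝ := by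
  have := margin_le_of_pos_label hsep hp
  have := margin_le_of_neg_label hsep hq
  rw [inner_sub_right]
  linarith

lemma margin_le_mul_inner {x₀ u : EuclideanSpace ℝ (Fin d)} {ε : ℝ} (hsep : Separates w b S)
    (hp : (x₀ + ε • u, 1) ∈ S) (hq : (x₀ - ε • u, -1) ∈ S) : Margin w b S ≤ ε * ⟪w, u⟫_ℝ := by
  have h := two_mul_margin_le_inner_sub hsep hp hq
  rw [show x₀ + ε • u - (x₀ - ε • u) = (2 * ε) • u by module, real_inner_smul_right] at h
  linarith

end Margin

/-- If `p⁺ = x₀ + ε • w_g` (labeled +1) and `p⁻ = x₀ - ε • w_g` (labeled -1),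
with `x₀` on the boundary of `g`, are in the training set, and every other positive point
lies at distance `> ε` on the positive side and every other negative point at distance `> ε`
on the negative side, then the maximum-margin hyperplane of the training set is exactly
the boundary of `g`. -/
theorem stmt_2 {d : ℕ} (wg : EuclideanSpace ℝ (Fin d)) (b : ℝ) (hwg : ‖wg‖ = 1)
    (x₀ : EuclideanSpace ℝ (Fin d)) (hx₀ : ⟪wg, x₀⟫_ℝ + b = 0)
    (ε : ℝ) (hε : 0 < ε)
    (S : Finset (EuclideanSpace ℝ (Fin d) × ℝ))
    (hlab : ∀ p ∈ S, p.2 = 1 ∨ p.2 = -1)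
    (hplus : (x₀ + ε • wg, (1 : ℝ)) ∈ S)
    (hminus : (x₀ - ε • wg, (-1 : ℝ)) ∈ S)
    (hposFar : ∀ p ∈ S, p.2 = (1 : ℝ) → p.1 ≠ x₀ + ε • wg → ε < ⟪wg, p.1⟫_ℝ + b)
    (hnegFar : ∀ p ∈ S, p.2 = (-1 : ℝ) → p.1 ≠ x₀ - ε • wg → ⟪wg, p.1⟫_ℝ + b < -ε) :
    IsMaxMargin wg b S ∧
      ∀ w' b', IsMaxMargin w' b' S →
        {x : EuclideanSpace ℝ (Fin d) | ⟪w', x⟫_ℝ + b' = 0} =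
          {x : EuclideanSpace ℝ (Fin d) | ⟪wg, x⟫_ℝ + b = 0} := by
  have hfp : ⟪wg, x₀ + ε • wg⟫_ℝ + b = ε := by
    rw [inner_add_right, real_inner_smul_right, real_inner_self_eq_norm_sq, hwg]; linarith
  have hfm : ⟪wg, x₀ - ε • wg⟫_ℝ + b = -ε := by
    rw [inner_sub_right, real_inner_smul_right, real_inner_self_eq_norm_sq, hwg]; linarith
  have hsigned : ∀ p ∈ S, ε ≤ p.2 * (⟪wg, p.1⟫_ℝ + b) := by
    rintro ⟨x, y⟩ hp
    rcases hlab _ hp with rfl | rfl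
    · rcases eq_or_ne x (x₀ + ε • wg) with rfl | hx
      · simp [hfp]
      · linarith [hposFar _ hp rfl hx]
    · rcases eq_or_ne x (x₀ - ε • wg) with rfl | hx
      · simp [hfm]
      · linarith [hnegFar _ hp rfl hx]
  have hsep : Separates wg b S := fun p hp => hε.le.trans (hsigned p hp)
  have hmargin : Margin wg b S = ε :=
    margin_eq_of_forall_le hplus (by rw [hfp, abs_of_pos hε]) fun p hp =>
      le_abs_of_le_mul_of_sign (hlab p hp) (hsigned p hp)
  refine ⟨⟨hwg, hsep, fun w' b' hw' hsep' => ?_⟩, fun w' b' ⟨hw', hsep', hmax'⟩ => ?_⟩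
  · calc Margin w' b' S ≤ ε * ⟪w', wg⟫_ℝ := margin_le_mul_inner hsep' hplus hminus
      _ ≤ ε * 1 := by gcongr; exact real_inner_le_one_of_norm_eq_one hw' hwg
      _ = Margin wg b S := by rw [hmargin, mul_one]
  · have hge : ε ≤ Margin w' b' S := hmargin ▸ hmax' wg b hwg hsep
    have hinner : ⟪w', wg⟫_ℝ = 1 := by
      nlinarith [margin_le_mul_inner hsep' hplus hminus, real_inner_le_one_of_norm_eq_one hw' hwg]
    obtain rfl : w' = wg := (inner_eq_one_iff_of_norm_eq_one hw' hwg).1 hinner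
    have := margin_le_of_pos_label hsep' hplus
    have := margin_le_of_neg_label hsep' hminus
    obtain rfl : b' = b := by linarith
    rfl
end

section
/- A greedy (myopic) single-point strategy for a strategic litigator with a 1D nearest-neighbor learner can cause irreversible error: there exist f*, g, and an initial configuration such that some single point p minimizes the error after one addition among all single points, yet after adding (p, f*(p)) no further set of points labeled by f* can reduce the error to 0, while a different two-point choice achieves error 0. -/
open scoped Classical

/-- 1D nearest-neighbor classifier: the label of (a) nearest training point;
on the empty training set it defaults to +1 (all-positive). -/
noncomputable def nn (S : Finset (ℝ × ℝ)) (x : ℝ) : ℝ :=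
  if h : S.Nonempty then ((S.exists_min_image (fun p => |x - p.1|) h).choose).2 else 1

/-- Error of the nearest-neighbor classifier trained on `S` with respect to the goal
function `g`, under the uniform distribution on `[0,1]` (Lebesgue measure of the
disagreement region). -/
noncomputable def nnErr (S : Finset (ℝ × ℝ)) (g : ℝ → ℝ) : ENNReal :=
  MeasureTheory.volume {x ∈ Set.Icc (0 : ℝ) 1 | nn S x ≠ g x}

/-!
Every point labelled by `f*` at or to the right of `a` carries the label `-1`, and every
positively labelled point lies strictly left of `a`. So once `(a, -1)` is in the training set,
each `x ∈ (a, b)` is strictly closer to `a` than to any positive point, and the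
nearest-neighbor classifier predicts `-1` on all of `(a, b)`, where `g` says `+1`. Before
`p = a` is added, the two points `(0, +1)` and `(1, -1)` put the decision boundary at their
midpoint `1/2 = b`, so they reproduce `g` up to a null set.
-/

open MeasureTheory

lemma nn_eq_of_forall_isNearest {S : Finset (ℝ × ℝ)} (hS : S.Nonempty) {x v : ℝ}
    (h : ∀ q ∈ S, (∀ q' ∈ S, |x - q.1| ≤ |x - q'.1|) → q.2 = v) :
    nn S x = v := by
  rw [nn, dif_pos hS]
  obtain ⟨hmem, hmin⟩ := (S.exists_min_image (fun p => |x - p.1|) hS).choose_spec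
  exact h _ hmem hmin

lemma nn_pair_of_abs_sub_lt {u w s t x : ℝ} (hx : |x - u| < |x - w|) :
    nn {(u, s), (w, t)} x = s := by
  refine nn_eq_of_forall_isNearest (Finset.insert_nonempty _ _) fun q hq hmin => ?_
  rcases Finset.mem_insert.1 hq with rfl | hq
  · rfl
  · rw [Finset.mem_singleton.1 hq] at hmin
    exact absurd (hmin _ (Finset.mem_insert_self _ _)) (not_le.2 hx)

lemma nn_eq_of_mem_of_lt {S : Finset (ℝ × ℝ)} {c v x : ℝ} (hc : (c, v) ∈ S)
    (hS : ∀ z ∈ S, z.2 = v ∨ z.1 < c) (hx : c < x) : nn S x = v := by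
  refine nn_eq_of_forall_isNearest ⟨_, hc⟩ fun q hq hmin => ?_
  refine (hS q hq).resolve_right fun hqc => ?_
  have hle := hmin _ hc
  rw [abs_of_pos (sub_pos.2 hx), abs_of_pos (by linarith)] at hle
  linarith

lemma nnErr_eq_zero_of_subset_singleton {S : Finset (ℝ × ℝ)} {g : ℝ → ℝ} {m : ℝ}
    (h : ∀ x ∈ Set.Icc (0 : ℝ) 1, x ≠ m → nn S x = g x) : nnErr S g = 0 :=
  measure_mono_null (fun x ⟨hx, hne⟩ => by_contra fun hxm => hne (h x hx hxm))
    (Real.volume_singleton (a := m))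

lemma nnErr_pos_of_Ioo {S : Finset (ℝ × ℝ)} {g : ℝ → ℝ} {c d : ℝ} (hcd : c < d)
    (hsub : Set.Ioo c d ⊆ Set.Icc 0 1) (h : ∀ x ∈ Set.Ioo c d, nn S x ≠ g x) :
    0 < nnErr S g :=
  ((Measure.measure_Ioo_pos volume).2 hcd).trans_le <|
    measure_mono fun x hx => ⟨hsub hx, h x hx⟩

lemma nnErr_pair_eq_zero {u w : ℝ} (huw : u < w) {g : ℝ → ℝ}
    (hg : ∀ x, g x = if x < (u + w) / 2 then 1 else -1) :
    nnErr {(u, 1), (w, -1)} g = 0 := by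
  refine nnErr_eq_zero_of_subset_singleton (m := (u + w) / 2) fun x _ hxm => ?_
  rcases lt_or_gt_of_ne hxm with hlt | hgt
  · rw [hg, if_pos hlt, nn_pair_of_abs_sub_lt (sq_lt_sq.1 (by nlinarith))]
  · rw [hg, if_neg hgt.not_gt, Finset.pair_comm,
      nn_pair_of_abs_sub_lt (sq_lt_sq.1 (by nlinarith))]

/-- Greedy choice can cause irreversible error in 1D nearest-neighbor
litigation. With thresholds `f*(x) = -1 ↔ x ≥ a` and `g(x) = -1 ↔ x ≥ b` (`a = 1/4`,
`b = 1/2`), no historical data: the point `p = a` is labeled `-1` by `f*`; there is a pair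
of points (labeled by `f*`) achieving error 0, but after adding `(p, f*(p))` every further
finite set of points labeled by `f*` leaves strictly positive error w.r.t. `g`. -/
theorem stmt_7 (a b : ℝ) (ha : a = 1 / 4) (hb : b = 1 / 2)
    (fstar g : ℝ → ℝ)
    (hf : ∀ x, fstar x = if x < a then 1 else -1)
    (hg : ∀ x, g x = if x < b then 1 else -1)
    (p : ℝ) (hp : p = a) :
    fstar p = -1 ∧
      (∃ q₁ q₂ : ℝ, nnErr {(q₁, fstar q₁), (q₂, fstar q₂)} g = 0) ∧
      (∀ Q : Finset ℝ,
        0 < nnErr (insert (p, fstar p) (Q.image fun q => (q, fstar q))) g) := by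
  subst hp ha hb
  have hfp : fstar (1 / 4) = -1 := by rw [hf]; norm_num
  have hlabel : ∀ q, fstar q = -1 ∨ q < 1 / 4 := fun q => by
    rw [hf]; split_ifs with h
    exacts [Or.inr h, Or.inl rfl]
  refine ⟨hfp, ⟨0, 1, ?_⟩, fun Q => ?_⟩
  · rw [show fstar 0 = 1 by rw [hf]; norm_num, show fstar 1 = -1 by rw [hf]; norm_num]
    exact nnErr_pair_eq_zero one_pos fun x => by rw [hg]; norm_num
  · rw [hfp]
    refine nnErr_pos_of_Ioo (by norm_num : (1 / 4 : ℝ) < 1 / 2)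
      (Set.Ioo_subset_Icc_self.trans (Set.Icc_subset_Icc (by norm_num) (by norm_num)))
      fun x ⟨hax, hxb⟩ => ?_
    have hS : ∀ z ∈ insert ((1 / 4 : ℝ), (-1 : ℝ)) (Q.image fun q => (q, fstar q)),
        z.2 = -1 ∨ z.1 < 1 / 4 := by
      simp only [Finset.mem_insert, Finset.mem_image]
      rintro z (rfl | ⟨q, -, rfl⟩)
      exacts [Or.inl rfl, hlabel q]
    rw [nn_eq_of_mem_of_lt (Finset.mem_insert_self _ _) hS hax, hg, if_pos hxb]
    norm_num
end

section
/- In the 1D nearest neighbor setting, if the litigator adds a positive point u and a negative point v with u < v, symmetric about the boundary b of the goal threshold function g (i.e., (u+v)/2 = b), and u, v are each strictly closer to b than any historical point, then the nearest-neighbor classifier on the augmented dataset equals g almost everywhere. -/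
/-!
The two new points sit at distance `r = b - u` on either side of `b`, and every other point is
farther than `r` from `b`. So for `x < b` the positive point `b - r` is strictly closer to `x` than
any point right of `b`, which all lie at or beyond `b + r`; the nearest neighbour of `x` is thus
left of `b` and carries the label `+1`. The case `x > b` is symmetric.
-/

open scoped Classical

theorem nn_eq_of_forall_nearest {S : Finset (ℝ × ℝ)} {x c : ℝ} (hS : S.Nonempty)
    (h : ∀ m ∈ S, (∀ p ∈ S, |x - m.1| ≤ |x - p.1|) → m.2 = c) : nn S x = c := by
  obtain ⟨hm, hmin⟩ := (S.exists_min_image (fun p => |x - p.1|) hS).choose_spec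
  rw [nn, dif_pos hS]
  exact h _ hm hmin

theorem abs_sub_sub_lt_abs_sub {x b r q : ℝ} (hr : 0 < r) (hx : x < b) (hq : b + r ≤ q) :
    |x - (b - r)| < |x - q| := by
  rw [abs_sub_comm x q, abs_of_pos (by linarith : 0 < q - x), abs_lt]
  constructor <;> linarith

theorem abs_sub_add_lt_abs_sub {x b r q : ℝ} (hr : 0 < r) (hx : b < x) (hq : q ≤ b - r) :
    |x - (b + r)| < |x - q| := by
  rw [abs_of_pos (by linarith : 0 < x - q), abs_lt]
  constructor <;> linarith

theorem add_le_of_le_abs_sub {b r q : ℝ} (hr : r ≤ |q - b|) (hq : b ≤ q) : b + r ≤ q := by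
  rw [abs_of_nonneg (sub_nonneg.2 hq)] at hr
  linarith

theorem le_sub_of_le_abs_sub {b r q : ℝ} (hr : r ≤ |q - b|) (hq : q ≤ b) : q ≤ b - r := by
  rw [abs_of_nonpos (sub_nonpos.2 hq)] at hr
  linarith

theorem nn_eq_threshold_of_margin {S : Finset (ℝ × ℝ)} {b r : ℝ} (hr : 0 < r)
    (hu : (b - r, 1) ∈ S) (hv : (b + r, -1) ∈ S) (hmargin : ∀ p ∈ S, r ≤ |p.1 - b|)
    (hcons : ∀ p ∈ S, (p.1 < b → p.2 = 1) ∧ (b < p.1 → p.2 = -1))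
    {x : ℝ} (hx : x ≠ b) :
    nn S x = if x < b then 1 else -1 := by
  rcases hx.lt_or_gt with hxb | hxb
  · rw [if_pos hxb]
    refine nn_eq_of_forall_nearest ⟨_, hu⟩ fun m hm hnear => (hcons m hm).1 ?_
    by_contra! hmb
    exact (hnear _ hu).not_gt
      (abs_sub_sub_lt_abs_sub hr hxb (add_le_of_le_abs_sub (hmargin m hm) hmb))
  · rw [if_neg hxb.not_gt]
    refine nn_eq_of_forall_nearest ⟨_, hv⟩ fun m hm hnear => (hcons m hm).2 ?_
    by_contra! hmb
    exact (hnear _ hv).not_gt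
      (abs_sub_add_lt_abs_sub hr hxb (le_sub_of_le_abs_sub (hmargin m hm) hmb))

theorem stmt_9_general (Sh : Finset (ℝ × ℝ)) (b u v : ℝ) (g : ℝ → ℝ)
    (hg : ∀ x, g x = if x < b then 1 else -1)
    (hcons : ∀ p ∈ Sh, (p.1 < b → p.2 = 1) ∧ (b < p.1 → p.2 = -1))
    (hu : u < b) (hsym : b - u = v - b)
    (hfar : ∀ p ∈ Sh, b - u < |p.1 - b|) :
    ∀ x : ℝ, x ≠ b → nn (insert (u, 1) (insert (v, -1) Sh)) x = g x := by
  intro x hx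
  obtain ⟨r, rfl, rfl⟩ : ∃ r, u = b - r ∧ v = b + r := ⟨b - u, by ring, by linarith⟩
  have hr_pos : 0 < r := by linarith
  rw [hg]
  refine nn_eq_threshold_of_margin hr_pos (Finset.mem_insert_self _ _)
    (Finset.mem_insert_of_mem (Finset.mem_insert_self _ _)) ?_ ?_ hx
  · simp only [Finset.forall_mem_insert]
    exact ⟨by simp [abs_of_pos hr_pos], by simp [abs_of_pos hr_pos],
      fun p hp => by linarith [hfar p hp]⟩
  · simp only [Finset.forall_mem_insert]
    exact ⟨by simp [hr_pos.le], by simp [hr_pos.le], hcons⟩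

/-- If the litigator adds a positive point `u` and a negative point `v`,
symmetric about the boundary `b` of the goal threshold `g` and strictly closer to `b` than
every historical point (the historical data being consistent with `g`), then the
nearest-neighbor classifier on the augmented dataset equals `g` everywhere off `b`. -/
theorem stmt_9 (Sh : Finset (ℝ × ℝ)) (b u v : ℝ) (g : ℝ → ℝ)
    (hg : ∀ x, g x = if x < b then 1 else -1)
    (hcons : ∀ p ∈ Sh, (p.1 < b → p.2 = 1) ∧ (b < p.1 → p.2 = -1))
    (hu : u < b) (hv : b < v) (hsym : b - u = v - b)
    (hfar : ∀ p ∈ Sh, b - u < |p.1 - b|) :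
    ∀ x : ℝ, x ≠ b → nn (insert (u, 1) (insert (v, -1) Sh)) x = g x :=
  stmt_9_general Sh b u v g hg hcons hu hsym hfar
end

section
/- There exists a configuration in the 1D nearest-neighbor model where any single additional point strictly increases the learner's error with respect to the goal g, yet some set of multiple points labeled by f* reduces the error to 0. -/
open scoped Classical

/-!
With historical data `(-1, +)`, `(2, -)` and goal threshold `2/5`, the nearest-neighbour
boundary is `1/2`, so the error is `1/10`. Whenever every positive training point lies left of
every negative one, nearest neighbour is the threshold at the midpoint of the innermost pair, and
its error is the length of `[0, 1]` between `2/5` and that midpoint. A single new point of `[0, 1]`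
becomes one end of the innermost pair while the other end stays at `-1` or `2`, which pushes the
midpoint to `≥ 1` or `≤ 0` and the error up to `3/5` or `2/5`. The two points `3/10`
and `1/2` together put the midpoint exactly at `2/5`.
-/

open MeasureTheory Set

lemma abs_sub_lt_abs_sub_of_lt_midpoint {x a q : ℝ} (h : a < q) (hx : x < (a + q) / 2) :
    |x - a| < |x - q| :=
  sq_lt_sq.mp (by nlinarith)

lemma abs_sub_lt_abs_sub_of_midpoint_lt {x a q : ℝ} (h : q < a) (hx : (q + a) / 2 < x) :
    |x - a| < |x - q| :=
  sq_lt_sq.mp (by nlinarith)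

lemma nn_eq_of_forall_lt {S : Finset (ℝ × ℝ)} {x : ℝ} {p : ℝ × ℝ} (hp : p ∈ S)
    (h : ∀ q ∈ S, q.2 ≠ p.2 → |x - p.1| < |x - q.1|) : nn S x = p.2 := by
  have hS : S.Nonempty := ⟨p, hp⟩
  obtain ⟨hmem, hmin⟩ := (S.exists_min_image (fun p => |x - p.1|) hS).choose_spec
  rw [nn, dif_pos hS]
  by_contra hne
  exact (hmin p hp).not_gt (h _ hmem hne)

noncomputable def threshold (b x : ℝ) : ℝ := if x < b then 1 else -1

lemma threshold_ne_threshold_iff {b m x : ℝ} :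
    threshold m x ≠ threshold b x ↔ x ∈ Ico (min b m) (max b m) := by
  simp only [threshold, mem_Ico, min_le_iff, lt_max_iff]
  split_ifs <;> grind

def IsSeparated (S : Finset (ℝ × ℝ)) (a c : ℝ) : Prop :=
  a < c ∧ (a, 1) ∈ S ∧ (c, -1) ∈ S ∧ ∀ q ∈ S, q.1 ≤ a ∧ q.2 = 1 ∨ c ≤ q.1 ∧ q.2 = -1

namespace IsSeparated

variable {S : Finset (ℝ × ℝ)} {a c x : ℝ}

lemma insert_pos (hS : IsSeparated S a c) (hax : a ≤ x) (hxc : x < c) :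
    IsSeparated (insert (x, 1) S) x c := by
  obtain ⟨-, -, hc, hS⟩ := hS
  refine ⟨hxc, Finset.mem_insert_self _ _, Finset.mem_insert_of_mem hc, ?_⟩
  rw [Finset.forall_mem_insert]
  exact ⟨Or.inl ⟨le_rfl, rfl⟩, fun q hq => (hS q hq).imp_left fun h => ⟨h.1.trans hax, h.2⟩⟩

lemma insert_neg (hS : IsSeparated S a c) (hax : a < x) (hxc : x ≤ c) :
    IsSeparated (insert (x, -1) S) a x := by
  obtain ⟨-, ha, -, hS⟩ := hS
  refine ⟨hax, Finset.mem_insert_of_mem ha, Finset.mem_insert_self _ _, ?_⟩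
  rw [Finset.forall_mem_insert]
  exact ⟨Or.inr ⟨le_rfl, rfl⟩, fun q hq => (hS q hq).imp_right fun h => ⟨hxc.trans h.1, h.2⟩⟩

lemma nn_eq_threshold (hS : IsSeparated S a c) (hx : x ≠ (a + c) / 2) :
    nn S x = threshold ((a + c) / 2) x := by
  obtain ⟨hac, ha, hc, hS⟩ := hS
  rcases hx.lt_or_gt with hx | hx
  · rw [threshold, if_pos hx]
    refine nn_eq_of_forall_lt ha fun q hq hq1 => ?_
    obtain ⟨hqc, -⟩ := (hS q hq).resolve_left fun h => hq1 h.2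
    exact abs_sub_lt_abs_sub_of_lt_midpoint (hac.trans_le hqc) (by linarith)
  · rw [threshold, if_neg hx.not_gt]
    refine nn_eq_of_forall_lt hc fun q hq hq1 => ?_
    obtain ⟨hqa, -⟩ := (hS q hq).resolve_right fun h => hq1 h.2
    exact abs_sub_lt_abs_sub_of_midpoint_lt (hqa.trans_lt hac) (by linarith)

/-- The length of `[0, 1]` between `b` and the midpoint of the innermost pair. -/
lemma nnErr_threshold (hS : IsSeparated S a c) (b : ℝ) :
    nnErr S (threshold b) =
      ENNReal.ofReal (min 1 (max b ((a + c) / 2)) - max 0 (min b ((a + c) / 2))) := by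
  set m := (a + c) / 2
  have hmem : ∀ y ∉ ({1, m} : Set ℝ), y ∈ {y ∈ Icc (0 : ℝ) 1 | nn S y ≠ threshold b y} ↔
      y ∈ Ico 0 1 ∩ Ico (min b m) (max b m) := by
    intro y hy
    simp only [mem_insert_iff, mem_singleton_iff, not_or] at hy
    rw [mem_ofPred_eq, mem_inter_iff, nn_eq_threshold hS hy.2, threshold_ne_threshold_iff]
    exact and_congr_left' ⟨fun h => ⟨h.1, h.2.lt_of_ne hy.1⟩, fun h => ⟨h.1, h.2.le⟩⟩
  have hnull : volume ({1, m} : Set ℝ) = 0 := (toFinite _).measure_zero _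
  have hae : {y ∈ Icc (0 : ℝ) 1 | nn S y ≠ threshold b y} =ᵐ[volume]
      (Ico 0 1 ∩ Ico (min b m) (max b m) : Set ℝ) :=
    ae_eq_set.2
      ⟨measure_mono_null (fun y hy => not_not.mp fun h => hy.2 ((hmem y h).1 hy.1)) hnull,
        measure_mono_null (fun y hy => not_not.mp fun h => hy.2 ((hmem y h).2 hy.1)) hnull⟩
  rw [nnErr, measure_congr hae, Ico_inter_Ico, Real.volume_Ico]

end IsSeparated

lemma isSeparated_pair : IsSeparated {(-1, 1), (2, -1)} (-1) 2 :=
  ⟨by norm_num, by simp, by simp, by norm_num⟩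

/-- There is a configuration of the 1D nearest-neighbor model — a goal
threshold function `g` (with `f* = g`) and historical data consistent with `g` having
positive current error — such that adding any single point of `[0,1]` (labeled by `g`)
strictly increases the error, yet some finite set of points labeled by `g` brings the
error to 0. -/
theorem stmt_10 :
    ∃ (Sh : Finset (ℝ × ℝ)) (b : ℝ) (g : ℝ → ℝ),
      (∀ x, g x = if x < b then 1 else -1) ∧
      (∀ p ∈ Sh, p.2 = g p.1) ∧
      0 < nnErr Sh g ∧
      (∀ x ∈ Set.Icc (0 : ℝ) 1, (x, g x) ∉ Sh →
        nnErr Sh g < nnErr (insert (x, g x) Sh) g) ∧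
      (∃ X : Finset ℝ, nnErr (Sh ∪ X.image fun x => (x, g x)) g = 0) := by
  have hSh := isSeparated_pair
  refine ⟨{(-1, 1), (2, -1)}, 2 / 5, threshold (2 / 5), fun x => rfl, ?_, ?_, ?_,
    ⟨{3 / 10, 1 / 2}, ?_⟩⟩
  · norm_num [threshold]
  · rw [hSh.nnErr_threshold]
    norm_num
  · rintro x ⟨hx0, hx1⟩ -
    rw [hSh.nnErr_threshold]
    by_cases hx : x < 2 / 5
    · rw [threshold, if_pos hx, (hSh.insert_pos (by linarith) (by linarith)).nnErr_threshold,
        ENNReal.ofReal_lt_ofReal_iff']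
      simp only [min_def, max_def]
      split_ifs <;> constructor <;> linarith
    · rw [threshold, if_neg hx, (hSh.insert_neg (by linarith) (by linarith)).nnErr_threshold,
        ENNReal.ofReal_lt_ofReal_iff']
      simp only [min_def, max_def]
      split_ifs <;> constructor <;> linarith
  · have hX : ({(-1, 1), (2, -1)} ∪
        ({3 / 10, 1 / 2} : Finset ℝ).image fun x => (x, threshold (2 / 5) x)) =
        insert (3 / 10, 1) (insert (1 / 2, -1) {(-1, 1), (2, -1)}) := by
      ext
      norm_num [threshold]
      tauto
    rw [hX, ((hSh.insert_neg (by norm_num) (by norm_num)).insert_pos (by norm_num)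
      (by norm_num)).nnErr_threshold]
    norm_num
end

section
/- The output of a hard-margin SVM on a linearly separable dataset in ℝ^d is determined by at most d+1 support vectors: there exists a subset T of the dataset of size at most d+1 such that the maximum-margin hyperplane for T equals the maximum-margin hyperplane for the full dataset. -/
open scoped InnerProductSpace Classical

open Filter Topology

lemma abs_eq_mul_of_mul_nonneg {y a : ℝ} (hy : y = 1 ∨ y = -1) (h : 0 ≤ y * a) :
    |a| = y * a := by
  rcases hy with rfl | rfl <;> simp_all [abs_of_nonneg, abs_of_nonpos]

theorem AffineIndependent.linearIndependent_of_map_eq {k V ι : Type*} [Field k]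
    [AddCommGroup V] [Module k V] {p : ι → V} (hp : AffineIndependent k p) (ℓ : V →ₗ[k] k)
    {c : k} (hc : c ≠ 0) (hℓ : ∀ i, ℓ (p i) = c) : LinearIndependent k p := by
  rw [linearIndependent_iff']
  intro s g hg
  refine hp.eq_zero_of_sum_eq_zero ?_ hg
  have := congrArg ℓ hg
  simp only [map_sum, map_smul, hℓ, smul_eq_mul, map_zero, ← Finset.sum_mul] at this
  exact (mul_eq_zero.1 this).resolve_right hc

theorem exists_affineIndependent_of_mem_convexHull_image {𝕜 α V : Type*} [Field 𝕜]
    [LinearOrder 𝕜] [IsStrictOrderedRing 𝕜] [AddCommGroup V] [Module 𝕜 V] {A : Finset α}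
    {f : α → V} (hf : Set.InjOn f A) {q : V} (hq : q ∈ convexHull 𝕜 (f '' A)) :
    ∃ T ⊆ A, AffineIndependent 𝕜 (fun p : T => f p) ∧ ∃ ν : α → 𝕜,
      (∀ p ∈ T, 0 ≤ ν p) ∧ ∑ p ∈ T, ν p = 1 ∧ ∑ p ∈ T, ν p • f p = q := by
  classical
  rw [convexHull_eq_union] at hq
  simp only [Set.mem_iUnion, exists_prop] at hq
  obtain ⟨t, htA, ht, hqt⟩ := hq
  obtain ⟨ν, hν0, hν1, hνq⟩ := Finset.mem_convexHull'.1 hqt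
  set T := A.filter (f · ∈ t)
  have hTf : Set.InjOn f T := hf.mono (Finset.filter_subset _ _)
  have himage : T.image f = t := by
    ext y
    simp only [Finset.mem_image, Finset.mem_filter, T]
    constructor
    · rintro ⟨p, ⟨-, hp⟩, rfl⟩; exact hp
    · intro hy
      obtain ⟨p, hp, rfl⟩ := htA hy
      exact ⟨p, ⟨hp, hy⟩, rfl⟩
  let e : T ↪ t := ⟨fun p => ⟨f p, (Finset.mem_filter.1 p.2).2⟩,
    fun p p' h => Subtype.ext (hTf p.2 p'.2 (congrArg Subtype.val h))⟩
  refine ⟨T, Finset.filter_subset _ _, ht.comp_embedding e, ν ∘ f, fun p hp => ?_, ?_, ?_⟩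
  · exact hν0 _ (Finset.mem_filter.1 hp).2
  · rwa [← himage, Finset.sum_image hTf] at hν1
  · rwa [← himage, Finset.sum_image hTf] at hνq

section Margin

variable {d : ℕ}

noncomputable def functionalMargin (w : EuclideanSpace ℝ (Fin d)) (b : ℝ)
    (p : EuclideanSpace ℝ (Fin d) × ℝ) : ℝ :=
  p.2 * (⟪w, p.1⟫_ℝ + b)

def signedLift (p : EuclideanSpace ℝ (Fin d) × ℝ) : EuclideanSpace ℝ (Fin d) × ℝ :=
  (p.2 • p.1, p.2)

variable {w u : EuclideanSpace ℝ (Fin d)} {b σ : ℝ} {S : Finset (EuclideanSpace ℝ (Fin d) × ℝ)}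

lemma functionalMargin_smul (c : ℝ) (p : EuclideanSpace ℝ (Fin d) × ℝ) :
    functionalMargin (c • w) (c * b) p = c * functionalMargin w b p := by
  simp only [functionalMargin, real_inner_smul_left]; ring

lemma functionalMargin_sub_smul (c : ℝ) (p : EuclideanSpace ℝ (Fin d) × ℝ) :
    functionalMargin (w - c • u) (b - c * σ) p =
      functionalMargin w b p - c * functionalMargin u σ p := by
  simp only [functionalMargin, inner_sub_left, real_inner_smul_left]; ring

lemma signedLift_injOn : Set.InjOn (signedLift (d := d)) {p | p.2 ≠ 0} := by
  intro p hp q _ h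
  simp only [signedLift, Prod.mk.injEq] at h
  obtain ⟨h1, h2⟩ := h
  rw [h2] at h1
  exact Prod.ext (smul_right_injective _ (h2 ▸ hp) h1) h2

lemma margin_eq_inf' (hS : S.Nonempty) :
    Margin w b S = S.inf' hS (fun p => |⟪w, p.1⟫_ℝ + b|) := by
  rw [Finset.inf'_eq_csInf_image, Margin]
  congr 1
  ext r
  simp [eq_comm]

lemma margin_eq_inf'_functionalMargin (hlab : ∀ p ∈ S, p.2 = 1 ∨ p.2 = -1)
    (hsep : Separates w b S) (hS : S.Nonempty) :
    Margin w b S = S.inf' hS (functionalMargin w b) := by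
  rw [margin_eq_inf']
  exact Finset.inf'_congr hS rfl fun p hp => abs_eq_mul_of_mul_nonneg (hlab p hp) (hsep p hp)

lemma Separates.margin_le_functionalMargin (hlab : ∀ p ∈ S, p.2 = 1 ∨ p.2 = -1)
    (hsep : Separates w b S) {p : EuclideanSpace ℝ (Fin d) × ℝ} (hp : p ∈ S) :
    Margin w b S ≤ functionalMargin w b p := by
  rw [margin_eq_inf'_functionalMargin hlab hsep ⟨p, hp⟩]
  exact Finset.inf'_le _ hp

lemma IsMaxMargin.margin_pos (hmm : IsMaxMargin w b S) (hS : S.Nonempty)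
    {w' : EuclideanSpace ℝ (Fin d)} {b' : ℝ} (hw' : ‖w'‖ = 1)
    (hpos : ∀ p ∈ S, 0 < functionalMargin w' b' p) : 0 < Margin w b S := by
  refine lt_of_lt_of_le ?_ (hmm.2.2 w' b' hw' fun p hp => (hpos p hp).le)
  rw [margin_eq_inf' hS, Finset.lt_inf'_iff]
  exact fun p hp => abs_pos.2 (right_ne_zero_of_mul (hpos p hp).ne')

lemma IsMaxMargin.le_margin_mul_norm (hmm : IsMaxMargin w b S)
    (hlab : ∀ p ∈ S, p.2 = 1 ∨ p.2 = -1) (hS : S.Nonempty) {w' : EuclideanSpace ℝ (Fin d)}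
    {b' m : ℝ} (hm : 0 ≤ m) (hw' : w' ≠ 0) (h : ∀ p ∈ S, m ≤ functionalMargin w' b' p) :
    m ≤ Margin w b S * ‖w'‖ := by
  set c := ‖w'‖⁻¹
  have hc : 0 < c := inv_pos.2 (norm_pos_iff.2 hw')
  have hc1 : c * ‖w'‖ = 1 := inv_mul_cancel₀ (norm_ne_zero_iff.2 hw')
  have hsep : Separates (c • w') (c * b') S := fun p hp =>
    show 0 ≤ functionalMargin _ _ p by
      rw [functionalMargin_smul]; exact mul_nonneg hc.le (hm.trans (h p hp))
  have hmargin : c * m ≤ Margin (c • w') (c * b') S := by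
    rw [margin_eq_inf'_functionalMargin hlab hsep hS]
    exact Finset.le_inf' _ _ fun p hp =>
      (functionalMargin_smul c p).symm ▸ mul_le_mul_of_nonneg_left (h p hp) hc.le
  have hmax := hmm.2.2 _ _ (by simpa using norm_smul_inv_norm (𝕜 := ℝ) hw') hsep
  calc m = c * m * ‖w'‖ := by rw [mul_right_comm, hc1, one_mul]
    _ ≤ Margin w b S * ‖w'‖ := by gcongr; linarith

theorem eventually_norm_sub_smul_lt {F : Type*} [NormedAddCommGroup F] [InnerProductSpace ℝ F]
    {u w : F} (h : 0 < ⟪u, w⟫_ℝ) : ∀ᶠ ε in 𝓝[>] (0 : ℝ), ‖w - ε • u‖ < ‖w‖ := by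
  have hsmall : ∀ᶠ ε in 𝓝 (0 : ℝ), ε * ‖u‖ ^ 2 < 2 * ⟪u, w⟫_ℝ := by
    refine Tendsto.eventually_lt_const (v := 0 * ‖u‖ ^ 2) (by linarith) ?_
    exact (continuous_id.mul continuous_const).tendsto 0
  filter_upwards [nhdsWithin_le_nhds hsmall, self_mem_nhdsWithin] with ε hε (hε0 : 0 < ε)
  rw [← sq_lt_sq₀ (norm_nonneg _) (norm_nonneg _), norm_sub_sq_real, norm_smul,
    real_inner_smul_right, real_inner_comm, Real.norm_eq_abs, mul_pow, sq_abs]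
  nlinarith

theorem IsMaxMargin.inner_nonpos_of_forall_active (hmm : IsMaxMargin w b S)
    (hlab : ∀ p ∈ S, p.2 = 1 ∨ p.2 = -1) (hμ : 0 < Margin w b S)
    (hu : ∀ p ∈ S, functionalMargin w b p = Margin w b S → functionalMargin u σ p ≤ 0) :
    ⟪u, w⟫_ℝ ≤ 0 := by
  by_contra! huw
  set μ := Margin w b S
  have hS : S.Nonempty := Finset.nonempty_iff_ne_empty.2 fun h => by
    simp [μ, h, Margin] at hμ
  have hfeas : ∀ᶠ ε in 𝓝[>] (0 : ℝ), ∀ p ∈ S,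
      μ ≤ functionalMargin (w - ε • u) (b - ε * σ) p := by
    rw [Finset.eventually_all]
    intro p hp
    simp_rw [functionalMargin_sub_smul]
    rcases (hmm.2.1.margin_le_functionalMargin hlab hp).eq_or_lt with hactive | hinactive
    · filter_upwards [self_mem_nhdsWithin] with ε (hε : 0 < ε)
      nlinarith [hu p hp hactive.symm]
    · have hlim : Tendsto (fun ε => functionalMargin w b p - ε * functionalMargin u σ p) (𝓝 0)
          (𝓝 (functionalMargin w b p - 0 * functionalMargin u σ p)) :=
        (continuous_const.sub (continuous_id.mul continuous_const)).tendsto 0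
      exact nhdsWithin_le_nhds <| (hlim.eventually_const_lt (by simpa using hinactive)).mono
        fun _ => le_of_lt
  have hne : ∀ᶠ ε in 𝓝[>] (0 : ℝ), w - ε • u ≠ 0 := by
    refine nhdsWithin_le_nhds (Tendsto.eventually_ne (b₁ := w - (0 : ℝ) • u) ?_ (by
      simp [← norm_ne_zero_iff, hmm.1]))
    exact (continuous_const.sub (continuous_id.smul continuous_const)).tendsto 0
  obtain ⟨ε, hfeasε, hneε, hshort⟩ :=
    (hfeas.and (hne.and (eventually_norm_sub_smul_lt huw))).exists
  have := hmm.le_margin_mul_norm hlab hS hμ.le hneε hfeasε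
  rw [hmm.1] at hshort
  nlinarith

lemma exists_inner_add_mul_eq {F : Type*} [NormedAddCommGroup F] [InnerProductSpace ℝ F]
    [CompleteSpace F] (g : StrongDual ℝ (F × ℝ)) :
    ∃ (u : F) (σ : ℝ), ∀ x s, g (x, s) = ⟪u, x⟫_ℝ + s * σ := by
  refine ⟨(InnerProductSpace.toDual ℝ F).symm (g.comp (ContinuousLinearMap.inl ℝ F ℝ)), g (0, 1),
    fun x s => ?_⟩
  rw [InnerProductSpace.toDual_symm_apply, show (x, s) = (x, 0) + s • ((0 : F), (1 : ℝ)) by simp,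
    map_add, map_smul, smul_eq_mul]
  rfl

theorem IsMaxMargin.mem_convexHull_signedLift (hmm : IsMaxMargin w b S)
    (hlab : ∀ p ∈ S, p.2 = 1 ∨ p.2 = -1) (hμ : 0 < Margin w b S) :
    (Margin w b S • w, (0 : ℝ)) ∈
      convexHull ℝ (signedLift '' ↑(S.filter fun p => functionalMargin w b p = Margin w b S)) := by
  set μ := Margin w b S
  set A := S.filter fun p => functionalMargin w b p = μ
  by_contra hq
  obtain ⟨g, r, hgA, hgq⟩ := geometric_hahn_banach_closed_point (convex_convexHull ℝ _)
    ((A.finite_toSet.image _).isClosed_convexHull (𝕜 := ℝ)) hq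
  obtain ⟨u, σ, hg⟩ := exists_inner_add_mul_eq g
  -- Subtracting `r / μ` times `(w, b)` makes the separating functional negative on the lifts of
  -- the active points, while it stays positive at `(μ • w, 0)`.
  have hdescent : ⟪u - (r / μ) • w, w⟫_ℝ ≤ 0 := by
    refine hmm.inner_nonpos_of_forall_active hlab hμ (σ := σ - r / μ * b) fun p hp hactive => ?_
    have hgp := hgA _ (subset_convexHull ℝ _ ⟨p, Finset.mem_filter.2 ⟨hp, hactive⟩, rfl⟩)
    rw [signedLift, hg, real_inner_smul_right] at hgp
    rw [functionalMargin_sub_smul, hactive, div_mul_cancel₀ _ hμ.ne', functionalMargin]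
    linarith
  rw [hg, real_inner_smul_right] at hgq
  rw [inner_sub_left, real_inner_smul_left, real_inner_self_eq_norm_sq, hmm.1, one_pow, mul_one,
    sub_nonpos, le_div_iff₀ hμ] at hdescent
  linarith

theorem card_le_of_affineIndependent_signedLift {T : Finset (EuclideanSpace ℝ (Fin d) × ℝ)}
    (hT : AffineIndependent ℝ (fun p : T => signedLift (p : EuclideanSpace ℝ (Fin d) × ℝ)))
    {μ : ℝ} (hμ : μ ≠ 0) (hactive : ∀ p ∈ T, functionalMargin w b p = μ) :
    T.card ≤ d + 1 := by
  let ℓ : (EuclideanSpace ℝ (Fin d) × ℝ) →ₗ[ℝ] ℝ :=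
    (innerₛₗ ℝ w).coprod (LinearMap.id.smulRight b)
  have hli := hT.linearIndependent_of_map_eq ℓ hμ fun p => by
    rw [← hactive p p.2]
    simp [ℓ, signedLift, functionalMargin]
    ring
  simpa [Module.finrank_prod, finrank_euclideanSpace_fin] using hli.fintype_card_le_finrank

section Certificate

variable {T : Finset (EuclideanSpace ℝ (Fin d) × ℝ)} {ν : EuclideanSpace ℝ (Fin d) × ℝ → ℝ}
  {v : EuclideanSpace ℝ (Fin d)}

lemma margin_eq_of_forall_functionalMargin_eq (hlab : ∀ p ∈ T, p.2 = 1 ∨ p.2 = -1)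
    (hT : T.Nonempty) {μ : ℝ} (hμ : 0 ≤ μ) (hactive : ∀ p ∈ T, functionalMargin w b p = μ) :
    Margin w b T = μ := by
  have hsep : Separates w b T := fun p hp => show 0 ≤ functionalMargin w b p from hactive p hp ▸ hμ
  rw [margin_eq_inf'_functionalMargin hlab hsep hT, Finset.inf'_congr hT rfl hactive,
    Finset.inf'_const]

lemma sum_mul_functionalMargin_eq_inner (hν : ∑ p ∈ T, ν p • signedLift p = (v, 0))
    (w' : EuclideanSpace ℝ (Fin d)) (b' : ℝ) :
    ∑ p ∈ T, ν p * functionalMargin w' b' p = ⟪w', v⟫_ℝ := by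
  have hfst : ∑ p ∈ T, (ν p * p.2) • p.1 = v := by
    simpa [signedLift, Prod.fst_sum, smul_smul] using congrArg Prod.fst hν
  have hsnd : ∑ p ∈ T, ν p * p.2 = 0 := by
    simpa [signedLift, Prod.snd_sum] using congrArg Prod.snd hν
  calc ∑ p ∈ T, ν p * functionalMargin w' b' p
      = ⟪w', ∑ p ∈ T, (ν p * p.2) • p.1⟫_ℝ + b' * ∑ p ∈ T, ν p * p.2 := by
        rw [inner_sum, Finset.mul_sum, ← Finset.sum_add_distrib]
        refine Finset.sum_congr rfl fun p _ => ?_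
        rw [functionalMargin, real_inner_smul_right]
        ring
    _ = ⟪w', v⟫_ℝ := by rw [hfst, hsnd, mul_zero, add_zero]

theorem margin_le_of_sum_smul_signedLift_eq (hlab : ∀ p ∈ T, p.2 = 1 ∨ p.2 = -1)
    (hν0 : ∀ p ∈ T, 0 ≤ ν p) (hν1 : ∑ p ∈ T, ν p = 1)
    (hν : ∑ p ∈ T, ν p • signedLift p = (v, 0)) {w' : EuclideanSpace ℝ (Fin d)} {b' : ℝ}
    (hw' : ‖w'‖ = 1) (hsep : Separates w' b' T) : Margin w' b' T ≤ ‖v‖ :=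
  calc Margin w' b' T = ∑ p ∈ T, ν p * Margin w' b' T := by rw [← Finset.sum_mul, hν1, one_mul]
    _ ≤ ∑ p ∈ T, ν p * functionalMargin w' b' p := Finset.sum_le_sum fun p hp =>
        mul_le_mul_of_nonneg_left (hsep.margin_le_functionalMargin hlab hp) (hν0 p hp)
    _ = ⟪w', v⟫_ℝ := sum_mul_functionalMargin_eq_inner hν w' b'
    _ ≤ ‖v‖ := by simpa [hw'] using real_inner_le_norm w' v

theorem eq_of_sum_smul_signedLift_eq (hy : ∀ p ∈ T, p.2 ≠ 0) (hν0 : ∀ p ∈ T, 0 ≤ ν p)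
    (hν1 : ∑ p ∈ T, ν p = 1) {μ : ℝ} (hμ : 0 < μ)
    (hν : ∑ p ∈ T, ν p • signedLift p = (μ • w, 0)) (hw : ‖w‖ = 1)
    (hactive : ∀ p ∈ T, functionalMargin w b p = μ) {w' : EuclideanSpace ℝ (Fin d)} {b' : ℝ}
    (hw' : ‖w'‖ = 1) (h' : ∀ p ∈ T, μ ≤ functionalMargin w' b' p) : w' = w ∧ b' = b := by
  have hsum := sum_mul_functionalMargin_eq_inner hν w' b'
  rw [real_inner_smul_right] at hsum
  have hlow : μ ≤ ∑ p ∈ T, ν p * functionalMargin w' b' p :=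
    calc μ = ∑ p ∈ T, ν p * μ := by rw [← Finset.sum_mul, hν1, one_mul]
      _ ≤ _ := Finset.sum_le_sum fun p hp => mul_le_mul_of_nonneg_left (h' p hp) (hν0 p hp)
  have hinner : ⟪w', w⟫_ℝ = 1 := by
    refine le_antisymm (by simpa [hw, hw'] using real_inner_le_norm w' w) ?_
    nlinarith
  have hww' : w' = w := (inner_eq_one_iff_of_norm_eq_one hw' hw).1 hinner
  have htight : ∀ p ∈ T, ν p * (functionalMargin w' b' p - μ) = 0 := by
    refine (Finset.sum_eq_zero_iff_of_nonneg fun p hp =>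
      mul_nonneg (hν0 p hp) (sub_nonneg.2 (h' p hp))).1 ?_
    simp only [mul_sub, Finset.sum_sub_distrib, ← Finset.sum_mul, hν1, hsum, hinner]
    ring
  obtain ⟨p, hp, hνp⟩ := Finset.exists_ne_zero_of_sum_ne_zero (hν1 ▸ one_ne_zero)
  have hp' := (mul_eq_zero.1 (htight p hp)).resolve_left hνp
  rw [hww', sub_eq_zero, ← hactive p hp, functionalMargin, functionalMargin] at hp'
  exact ⟨hww', by simpa [hy p hp] using hp'⟩

theorem isMaxMargin_of_sum_smul_signedLift_eq (hlab : ∀ p ∈ T, p.2 = 1 ∨ p.2 = -1)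
    (hν0 : ∀ p ∈ T, 0 ≤ ν p) (hν1 : ∑ p ∈ T, ν p = 1) {μ : ℝ} (hμ : 0 ≤ μ)
    (hν : ∑ p ∈ T, ν p • signedLift p = (μ • w, 0)) (hw : ‖w‖ = 1)
    (hactive : ∀ p ∈ T, functionalMargin w b p = μ) : IsMaxMargin w b T := by
  have hmargin := margin_eq_of_forall_functionalMargin_eq hlab
    (Finset.nonempty_of_sum_ne_zero (hν1 ▸ one_ne_zero)) hμ hactive
  refine ⟨hw, fun p hp => show 0 ≤ functionalMargin w b p from hactive p hp ▸ hμ,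
    fun w' b' hw' hsep' => ?_⟩
  simpa [hmargin, norm_smul, hw, abs_of_nonneg hμ] using
    margin_le_of_sum_smul_signedLift_eq hlab hν0 hν1 hν hw' hsep'

end Certificate

end Margin

theorem stmt_11_general {d : ℕ} (S : Finset (EuclideanSpace ℝ (Fin d) × ℝ))
    (hlab : ∀ p ∈ S, p.2 = 1 ∨ p.2 = -1)
    (hpos : ∃ p ∈ S, p.2 = (1 : ℝ))
    (hsep : ∃ w' b', ‖w'‖ = 1 ∧ ∀ p ∈ S, 0 < p.2 * (⟪w', p.1⟫_ℝ + b'))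
    (w : EuclideanSpace ℝ (Fin d)) (b : ℝ) (hmm : IsMaxMargin w b S) :
    ∃ T ⊆ S, T.card ≤ d + 1 ∧ IsMaxMargin w b T ∧
      ∀ w' b', IsMaxMargin w' b' T →
        {x : EuclideanSpace ℝ (Fin d) | ⟪w', x⟫_ℝ + b' = 0} =
          {x : EuclideanSpace ℝ (Fin d) | ⟪w, x⟫_ℝ + b = 0} := by
  obtain ⟨p₀, hp₀, -⟩ := hpos
  obtain ⟨w₀, b₀, hw₀, hsep₀⟩ := hsep
  set μ := Margin w b S
  have hμ : 0 < μ := hmm.margin_pos ⟨p₀, hp₀⟩ hw₀ hsep₀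
  have hy : ∀ p ∈ S, p.2 ≠ 0 := fun p hp => by rcases hlab p hp with h | h <;> norm_num [h]
  set A := S.filter fun p => functionalMargin w b p = μ
  have hAS : A ⊆ S := Finset.filter_subset _ _
  obtain ⟨T, hTA, hTaff, ν, hν0, hν1, hν⟩ := exists_affineIndependent_of_mem_convexHull_image
    (signedLift_injOn.mono fun p hp => hy p (hAS hp)) (hmm.mem_convexHull_signedLift hlab hμ)
  have hTS : T ⊆ S := hTA.trans hAS
  have hlabT : ∀ p ∈ T, p.2 = 1 ∨ p.2 = -1 := fun p hp => hlab p (hTS hp)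
  have hactive : ∀ p ∈ T, functionalMargin w b p = μ := fun p hp =>
    (Finset.mem_filter.1 (hTA hp)).2
  have hmmT := isMaxMargin_of_sum_smul_signedLift_eq hlabT hν0 hν1 hμ.le hν hmm.1 hactive
  have hmarginT : Margin w b T = μ := margin_eq_of_forall_functionalMargin_eq hlabT
    (Finset.nonempty_of_sum_ne_zero (hν1 ▸ one_ne_zero)) hμ.le hactive
  refine ⟨T, hTS, card_le_of_affineIndependent_signedLift hTaff hμ.ne' hactive, hmmT,
    fun w' b' hmm' => ?_⟩
  obtain ⟨rfl, rfl⟩ := eq_of_sum_smul_signedLift_eq (fun p hp => hy p (hTS hp)) hν0 hν1 hμ hν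
    hmm.1 hactive hmm'.1 fun p hp =>
      hmarginT ▸ (hmm'.2.2 w b hmm.1 hmmT.2.1).trans (hmm'.2.1.margin_le_functionalMargin hlabT hp)
  rfl

/-- The hard-margin SVM output on a linearly separable dataset in ℝ^d is
determined by at most `d + 1` support vectors: there is a subset `T ⊆ S` of size at most
`d + 1` whose maximum-margin hyperplane coincides (as a hyperplane) with that of `S`. -/
theorem stmt_11 {d : ℕ} (S : Finset (EuclideanSpace ℝ (Fin d) × ℝ))
    (hlab : ∀ p ∈ S, p.2 = 1 ∨ p.2 = -1)
    (hpos : ∃ p ∈ S, p.2 = (1 : ℝ)) (hneg : ∃ p ∈ S, p.2 = (-1 : ℝ))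
    (hsep : ∃ w' b', ‖w'‖ = 1 ∧ ∀ p ∈ S, 0 < p.2 * (⟪w', p.1⟫_ℝ + b'))
    (w : EuclideanSpace ℝ (Fin d)) (b : ℝ) (hmm : IsMaxMargin w b S) :
    ∃ T ⊆ S, T.card ≤ d + 1 ∧ IsMaxMargin w b T ∧
      ∀ w' b', IsMaxMargin w' b' T →
        {x : EuclideanSpace ℝ (Fin d) | ⟪w', x⟫_ℝ + b' = 0} =
          {x : EuclideanSpace ℝ (Fin d) | ⟪w, x⟫_ℝ + b = 0} :=
  stmt_11_general S hlab hpos hsep w b hmm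
end
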